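/- arXiv:1804.11269 — 5 statements merged into one kernel-verified Lean document; each statement's English description precedes it below -/
import Mathlib

section
/- For n ≥ 2k³, if A and B are disjoint cross-intersecting families of k-subsets of [n], then min{|A|, |B|} ≤ (1/2)·C(n-1, k-1). -/
/-!
If one of the two families, say `𝒜`, contains two disjoint sets `s` and `t`, then every member
of `ℬ` meets both of them, so it contains some pair `{x, y}` with `x ∈ s`, `y ∈ t`; this bounds
`#ℬ` by `k² · C(n-2, k-2)`, which is at most `C(n-1, k-1) / 2` as soon as `n ≥ 2k³`. Otherwise
both families are intersecting, hence so is `𝒜 ∪ ℬ`, and Erdős–Ko–Rado gives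
`#𝒜 + #ℬ ≤ C(n-1, k-1)`.
-/

open Finset

lemma Set.Intersecting.union_of_forall_not_disjoint {α : Type*} [SemilatticeInf α] [OrderBot α]
    {s t : Set α} (hs : s.Intersecting) (ht : t.Intersecting)
    (hst : ∀ a ∈ s, ∀ b ∈ t, ¬Disjoint a b) : (s ∪ t).Intersecting := by
  rintro a (ha | ha) b (hb | hb)
  exacts [hs ha hb, hst a ha b hb, fun h => hst b hb a ha h.symm, ht ha hb]

lemma two_mul_sq_mul_choose_le_choose {n k : ℕ} (hk : 2 ≤ k) (hn : 2 * k ^ 3 ≤ n) :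
    2 * (k * k * (n - 2).choose (k - 2)) ≤ (n - 1).choose (k - 1) := by
  obtain ⟨j, rfl⟩ : ∃ j, k = j + 2 := ⟨k - 2, by omega⟩
  obtain ⟨m, rfl⟩ : ∃ m, n = m + 2 := ⟨n - 2, by have := Nat.one_le_pow 3 (j + 2); omega⟩
  simp only [Nat.add_sub_cancel, show m + 2 - 1 = m + 1 by omega, show j + 2 - 1 = j + 1 by omega]
  have hm : 2 * (j + 2) * (j + 2) * (j + 1) ≤ m + 1 := by nlinarith
  refine Nat.le_of_mul_le_mul_right ?_ (Nat.succ_pos j)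
  calc 2 * ((j + 2) * (j + 2) * m.choose j) * (j + 1)
      = 2 * (j + 2) * (j + 2) * (j + 1) * m.choose j := by ring
    _ ≤ (m + 1) * m.choose j := Nat.mul_le_mul_right _ hm
    _ = (m + 1).choose (j + 1) * (j + 1) := Nat.add_one_mul_choose_eq m j

lemma eq_empty_or_eq_empty_of_sized_of_le_one {α : Type*} {k : ℕ} (hk : k ≤ 1)
    {𝒜 ℬ : Finset (Finset α)}
    (h𝒜 : (𝒜 : Set (Finset α)).Sized k) (hℬ : (ℬ : Set (Finset α)).Sized k)
    (hdisj : Disjoint 𝒜 ℬ) (hcross : ∀ a ∈ 𝒜, ∀ b ∈ ℬ, ¬Disjoint a b) : 𝒜 = ∅ ∨ ℬ = ∅ := by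
  by_contra! h
  obtain ⟨⟨a, ha⟩, ⟨b, hb⟩⟩ := h
  obtain ⟨x, hxa, hxb⟩ := not_disjoint_iff.1 (hcross a ha b hb)
  have eq_singleton : ∀ u : Finset α, #u = k → x ∈ u → u = {x} := fun u hu hxu =>
    eq_singleton_iff_unique_mem.2 ⟨hxu, fun z hz => card_le_one.1 (hu.trans_le hk) z hz x hxu⟩
  rw [eq_singleton a (h𝒜 ha) hxa] at ha
  rw [eq_singleton b (hℬ hb) hxb] at hb
  exact disjoint_left.1 hdisj ha hb

section Counting

variable {α : Type*} [DecidableEq α] [Fintype α] {k : ℕ}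

lemma card_filter_pair_subset_powersetCard_univ (hk : 2 ≤ k) {x y : α} (hxy : x ≠ y) :
    #{u ∈ powersetCard k univ | {x, y} ⊆ u} = (Fintype.card α - 2).choose (k - 2) := by
  rw [card_filter_powersetCard_subset _ _ _ (subset_univ _) ((card_pair hxy).trans_le hk),
    card_pair hxy, card_univ]

lemma card_le_of_forall_not_disjoint_of_disjoint (hk : 2 ≤ k) {ℬ : Finset (Finset α)}
    (hℬ : (ℬ : Set (Finset α)).Sized k) {s t : Finset α} (hst : Disjoint s t)
    (hmeet : ∀ b ∈ ℬ, ¬Disjoint s b ∧ ¬Disjoint t b) :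
    #ℬ ≤ #s * #t * (Fintype.card α - 2).choose (k - 2) := by
  have hcover : ℬ ⊆ (s ×ˢ t).biUnion fun p => {u ∈ powersetCard k univ | {p.1, p.2} ⊆ u} := by
    intro b hb
    obtain ⟨x, hxs, hxb⟩ := not_disjoint_iff.1 (hmeet b hb).1
    obtain ⟨y, hyt, hyb⟩ := not_disjoint_iff.1 (hmeet b hb).2
    refine mem_biUnion.2 ⟨(x, y), mem_product.2 ⟨hxs, hyt⟩, mem_filter.2 ⟨?_, ?_⟩⟩
    · exact mem_powersetCard_univ.2 (hℬ hb)
    · exact insert_subset hxb (singleton_subset_iff.2 hyb)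
  rw [← card_product]
  refine (card_le_card hcover).trans (card_biUnion_le_card_mul _ _ _ fun p hp => ?_)
  obtain ⟨hps, hpt⟩ := mem_product.1 hp
  have hne : p.1 ≠ p.2 := fun h => disjoint_left.1 hst hps (h ▸ hpt)
  exact (card_filter_pair_subset_powersetCard_univ hk hne).le

lemma two_mul_card_le_choose_of_not_intersecting (hk : 2 ≤ k)
    (hn : 2 * k ^ 3 ≤ Fintype.card α) {𝒜 ℬ : Finset (Finset α)}
    (h𝒜 : (𝒜 : Set (Finset α)).Sized k) (hℬ : (ℬ : Set (Finset α)).Sized k)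
    (hcross : ∀ a ∈ 𝒜, ∀ b ∈ ℬ, ¬Disjoint a b) (hnot : ¬(𝒜 : Set (Finset α)).Intersecting) :
    2 * #ℬ ≤ (Fintype.card α - 1).choose (k - 1) := by
  simp only [Set.Intersecting, mem_coe, not_forall, not_not] at hnot
  obtain ⟨s, hs, t, ht, hst⟩ := hnot
  have hcard := card_le_of_forall_not_disjoint_of_disjoint hk hℬ hst
    fun b hb => ⟨hcross s hs b hb, hcross t ht b hb⟩
  rw [h𝒜 hs, h𝒜 ht] at hcard
  exact (Nat.mul_le_mul_left 2 hcard).trans (two_mul_sq_mul_choose_le_choose hk hn)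

end Counting

theorem two_mul_min_card_le_choose_of_crossIntersecting {n k : ℕ} (hn : 2 * k ^ 3 ≤ n)
    {𝒜 ℬ : Finset (Finset (Fin n))}
    (h𝒜 : (𝒜 : Set (Finset (Fin n))).Sized k) (hℬ : (ℬ : Set (Finset (Fin n))).Sized k)
    (hdisj : Disjoint 𝒜 ℬ) (hcross : ∀ a ∈ 𝒜, ∀ b ∈ ℬ, ¬Disjoint a b) :
    2 * min #𝒜 #ℬ ≤ (n - 1).choose (k - 1) := by
  rcases Nat.lt_or_ge k 2 with hk | hk
  · rcases eq_empty_or_eq_empty_of_sized_of_le_one (by omega) h𝒜 hℬ hdisj hcross with rfl | rfl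
      <;> simp
  have hcard : 2 * k ^ 3 ≤ Fintype.card (Fin n) := (Fintype.card_fin n).symm ▸ hn
  by_cases h𝒜int : (𝒜 : Set (Finset (Fin n))).Intersecting
  · by_cases hℬint : (ℬ : Set (Finset (Fin n))).Intersecting
    · have hunion : ((𝒜 ∪ ℬ : Finset _) : Set (Finset (Fin n))).Intersecting := by
        rw [coe_union]; exact h𝒜int.union_of_forall_not_disjoint hℬint hcross
      have hsized : ((𝒜 ∪ ℬ : Finset _) : Set (Finset (Fin n))).Sized k := by
        rw [coe_union]; exact Set.sized_union.2 ⟨h𝒜, hℬ⟩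
      have hhalf : k ≤ n / 2 := by
        have := Nat.le_self_pow (by norm_num : 3 ≠ 0) k
        omega
      have hekr := erdos_ko_rado hunion hsized hhalf
      rw [card_union_of_disjoint hdisj] at hekr
      omega
    · have := two_mul_card_le_choose_of_not_intersecting hk hcard hℬ h𝒜
        (fun b hb a ha h => hcross a ha b hb h.symm) hℬint
      simp only [Fintype.card_fin] at this
      omega
  · have := two_mul_card_le_choose_of_not_intersecting hk hcard h𝒜 hℬ hcross h𝒜int
    simp only [Fintype.card_fin] at this
    omega

theorem stmt_0 (n k : ℕ) (hn : n ≥ 2 * k ^ 3)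
    (A B : Finset (Finset (Fin n)))
    (hA : A ⊆ Finset.powersetCard k Finset.univ)
    (hB : B ⊆ Finset.powersetCard k Finset.univ)
    (hdisj : Disjoint A B)
    (hcross : ∀ a ∈ A, ∀ b ∈ B, (a ∩ b).Nonempty) :
    (min A.card B.card : ℚ) ≤ (1 / 2) * (n - 1).choose (k - 1) := by
  have key := two_mul_min_card_le_choose_of_crossIntersecting hn
    (subset_powersetCard_univ_iff.1 hA) (subset_powersetCard_univ_iff.1 hB) hdisj
    fun a ha b hb => not_disjoint_iff_nonempty_inter.2 (hcross a ha b hb)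
  have key' : (2 * min A.card B.card : ℚ) ≤ (n - 1).choose (k - 1) := by exact_mod_cast key
  rw [Nat.cast_min] at key'
  linarith
end

section
/- For all integers k ≥ 2 and l ≥ 2 with k ≥ l and (k,l) ≠ (2,2), one has k·C(k+l-2, k-2) + k·C(k+l-2, l-2) > C(k+l, k). -/
lemma stmt_4_aux (a b : ℕ) (ha : 1 ≤ a) (hba : b ≤ a) :
    2 * (b + 2) * ((a + 1) * (a + 2))
      < (a + 1) * ((a + 1) * ((a + 1) * (a + 2)))
          + (a + 1) * ((a + 1) * ((b + 1) * (b + 2))) := by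
  obtain ⟨t, rfl⟩ : ∃ t, a = b + t := ⟨a - b, by omega⟩
  rcases b with _ | c
  · obtain ⟨s, rfl⟩ : ∃ s, t = s + 1 := ⟨t - 1, by omega⟩
    nlinarith [Nat.zero_le (s^4), Nat.zero_le (s^3), Nat.zero_le (s^2), Nat.zero_le s]
  · nlinarith [Nat.zero_le (c^4), Nat.zero_le (c^3*t), Nat.zero_le (c^2*t^2),
      Nat.zero_le (c*t^3), Nat.zero_le (t^4), Nat.zero_le (c^3), Nat.zero_le (c^2*t),
      Nat.zero_le (c*t^2), Nat.zero_le (t^3), Nat.zero_le (c^2), Nat.zero_le (c*t),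
      Nat.zero_le (t^2), Nat.zero_le c, Nat.zero_le t]

theorem stmt_4 (k l : ℕ) (hk : 2 ≤ k) (hl : 2 ≤ l) (hkl : l ≤ k)
    (hne : (k, l) ≠ (2, 2)) :
    k * (k + l - 2).choose (k - 2) + k * (k + l - 2).choose (l - 2) >
      (k + l).choose k := by
  obtain ⟨a, rfl⟩ : ∃ a, k = a + 2 := ⟨k - 2, by omega⟩
  obtain ⟨b, rfl⟩ : ∃ b, l = b + 2 := ⟨l - 2, by omega⟩
  have hba : b ≤ a := by omega
  have ha : 1 ≤ a := by
    rcases Nat.eq_zero_or_pos a with h | h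
    · exfalso; apply hne; simp [h]; omega
    · exact h
  have e1 : a + 2 + (b + 2) - 2 = a + b + 2 := by omega
  have e2 : a + 2 - 2 = a := by omega
  have e3 : b + 2 - 2 = b := by omega
  rw [e1, e2, e3]
  set m := a + b + 2 with hm
  have hpas : (a + 2 + (b + 2)).choose (a + 2)
      = m.choose a + 2 * m.choose (a + 1) + m.choose (a + 2) := by
    have h : a + 2 + (b + 2) = (m + 1) + 1 := by omega
    rw [h, Nat.choose_succ_succ (m + 1) (a + 1), Nat.choose_succ_succ m a,
      Nat.choose_succ_succ m (a + 1)]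
    ring
  have hsym1 : m.choose (a + 2) = m.choose b := by
    have h : m - (a + 2) = b := by omega
    rw [← h, Nat.choose_symm (by omega)]
  have hsym2 : m.choose (b + 2) = m.choose a := by
    have h : m - (b + 2) = a := by omega
    rw [← h, Nat.choose_symm (by omega)]
  have h3 : m.choose (a + 1) * (a + 1) = m.choose a * (b + 2) := by
    have h := Nat.choose_succ_right_eq m a
    rwa [show m - a = b + 2 by omega] at h
  have h4a : m.choose (b + 1) * (b + 1) = m.choose b * (a + 2) := by
    have h := Nat.choose_succ_right_eq m b
    rwa [show m - b = a + 2 by omega] at h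
  have h4b : m.choose a * (b + 2) = m.choose (b + 1) * (a + 1) := by
    have h := Nat.choose_succ_right_eq m (b + 1)
    rwa [show m - (b + 1) = a + 1 by omega, hsym2] at h
  have hX : 0 < m.choose a := Nat.choose_pos (by omega)
  rw [hpas, hsym1]
  set X := m.choose a with hXdef
  set Y := m.choose b with hYdef
  set Z := m.choose (a + 1) with hZdef
  set W := m.choose (b + 1) with hWdef
  have hXY : Y * ((a + 2) * (a + 1)) = X * ((b + 2) * (b + 1)) := by
    calc Y * ((a + 2) * (a + 1)) = (Y * (a + 2)) * (a + 1) := by ring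
      _ = (W * (b + 1)) * (a + 1) := by rw [h4a]
      _ = (W * (a + 1)) * (b + 1) := by ring
      _ = (X * (b + 2)) * (b + 1) := by rw [← h4b]
      _ = X * ((b + 2) * (b + 1)) := by ring
  have key : 2 * Z < (a + 1) * (X + Y) := by
    have d1 : 2 * Z * ((a + 1) * ((a + 1) * (a + 2)))
        = (2 * (b + 2) * ((a + 1) * (a + 2))) * X := by
      calc 2 * Z * ((a + 1) * ((a + 1) * (a + 2)))
          = (Z * (a + 1)) * (2 * ((a + 1) * (a + 2))) := by ring
        _ = (X * (b + 2)) * (2 * ((a + 1) * (a + 2))) := by rw [h3]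
        _ = (2 * (b + 2) * ((a + 1) * (a + 2))) * X := by ring
    have d2 : (a + 1) * (X + Y) * ((a + 1) * ((a + 1) * (a + 2)))
        = ((a + 1) * ((a + 1) * ((a + 1) * (a + 2)))
            + (a + 1) * ((a + 1) * ((b + 1) * (b + 2)))) * X := by
      calc (a + 1) * (X + Y) * ((a + 1) * ((a + 1) * (a + 2)))
          = (a + 1) * ((a + 1) * ((a + 1) * (a + 2))) * X
            + ((a + 1) * (a + 1)) * (Y * ((a + 2) * (a + 1))) := by ring
        _ = (a + 1) * ((a + 1) * ((a + 1) * (a + 2))) * X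
            + ((a + 1) * (a + 1)) * (X * ((b + 2) * (b + 1))) := by rw [hXY]
        _ = ((a + 1) * ((a + 1) * ((a + 1) * (a + 2)))
            + (a + 1) * ((a + 1) * ((b + 1) * (b + 2)))) * X := by ring
    have hcoef : 2 * (b + 2) * ((a + 1) * (a + 2))
        < (a + 1) * ((a + 1) * ((a + 1) * (a + 2)))
            + (a + 1) * ((a + 1) * ((b + 1) * (b + 2))) := by
      exact stmt_4_aux a b ha hba
    have hmul : 2 * Z * ((a + 1) * ((a + 1) * (a + 2)))
        < (a + 1) * (X + Y) * ((a + 1) * ((a + 1) * (a + 2))) := by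
      rw [d1, d2]
      exact Nat.mul_lt_mul_of_pos_right hcoef hX
    exact Nat.lt_of_mul_lt_mul_right hmul
  have expand : (a + 2) * X + (a + 2) * Y = (X + Y) + (a + 1) * (X + Y) := by ring
  have expand2 : X + 2 * Z + Y = (X + Y) + 2 * Z := by ring
  rw [expand, expand2]
  exact Nat.add_lt_add_left key (X + Y)
end

section
/- Let S_{ij} denote the (i,j)-shift operation on families of finite sets. If A and B are cross-intersecting families of subsets of [n], then S_{ij}(A) and S_{ij}(B) are also cross-intersecting. -/
/-- The (i,j)-shift of a single set `F` relative to the family `𝓕`. -/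
def shiftSet (i j : ℕ) (𝓕 : Finset (Finset ℕ)) (F : Finset ℕ) : Finset ℕ :=
  if i ∈ F ∧ j ∉ F ∧ insert j (F.erase i) ∉ 𝓕 then insert j (F.erase i) else F

/-- The (i,j)-shift of a family. -/
def shiftFam (i j : ℕ) (𝓕 : Finset (Finset ℕ)) : Finset (Finset ℕ) :=
  𝓕.image (shiftSet i j 𝓕)

lemma key_shift (i j : ℕ) (A B : Finset (Finset ℕ)) (a b : Finset ℕ)
    (ha : a ∈ A) (hb : b ∈ B)
    (hcross : ∀ a ∈ A, ∀ b ∈ B, (a ∩ b).Nonempty)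
    (ca : i ∈ a ∧ j ∉ a ∧ insert j (a.erase i) ∉ A)
    (cb : ¬(i ∈ b ∧ j ∉ b ∧ insert j (b.erase i) ∉ B)) :
    ((insert j (a.erase i)) ∩ b).Nonempty := by
  obtain ⟨hia, hja, haA⟩ := ca
  push_neg at cb
  by_cases hib : i ∈ b
  · by_cases hjb : j ∈ b
    · exact ⟨j, Finset.mem_inter.mpr ⟨Finset.mem_insert_self _ _, hjb⟩⟩
    · have hbB : insert j (b.erase i) ∈ B := cb hib hjb
      obtain ⟨x, hx⟩ := hcross a ha _ hbB
      rw [Finset.mem_inter] at hx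
      obtain ⟨hxa, hxb⟩ := hx
      rcases Finset.mem_insert.mp hxb with rfl | hxb'
      · exact absurd hxa hja
      · obtain ⟨hxi, hxb⟩ := Finset.mem_erase.mp hxb'
        exact ⟨x, Finset.mem_inter.mpr
          ⟨Finset.mem_insert_of_mem (Finset.mem_erase.mpr ⟨hxi, hxa⟩), hxb⟩⟩
  · obtain ⟨x, hx⟩ := hcross a ha b hb
    rw [Finset.mem_inter] at hx
    obtain ⟨hxa, hxb⟩ := hx
    have hxi : x ≠ i := fun h => hib (h ▸ hxb)
    exact ⟨x, Finset.mem_inter.mpr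
      ⟨Finset.mem_insert_of_mem (Finset.mem_erase.mpr ⟨hxi, hxa⟩), hxb⟩⟩

theorem stmt_6 (n i j : ℕ) (hij : i ≠ j)
    (A B : Finset (Finset ℕ))
    (hA : ∀ a ∈ A, a ⊆ Finset.range n)
    (hB : ∀ b ∈ B, b ⊆ Finset.range n)
    (hcross : ∀ a ∈ A, ∀ b ∈ B, (a ∩ b).Nonempty) :
    ∀ a ∈ shiftFam i j A, ∀ b ∈ shiftFam i j B, (a ∩ b).Nonempty := by
  intro a' ha' b' hb'
  simp only [shiftFam, Finset.mem_image] at ha' hb'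
  obtain ⟨a, ha, rfl⟩ := ha'
  obtain ⟨b, hb, rfl⟩ := hb'
  have hcross' : ∀ b ∈ B, ∀ a ∈ A, (b ∩ a).Nonempty := fun b hb a ha => by
    rw [Finset.inter_comm]; exact hcross a ha b hb
  unfold shiftSet
  by_cases ca : i ∈ a ∧ j ∉ a ∧ insert j (a.erase i) ∉ A <;>
    by_cases cb : i ∈ b ∧ j ∉ b ∧ insert j (b.erase i) ∉ B
  · rw [if_pos ca, if_pos cb]
    exact ⟨j, Finset.mem_inter.mpr ⟨Finset.mem_insert_self _ _, Finset.mem_insert_self _ _⟩⟩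
  · rw [if_pos ca, if_neg cb]
    exact key_shift i j A B a b ha hb hcross ca cb
  · rw [if_neg ca, if_pos cb]
    rw [Finset.inter_comm]
    exact key_shift i j B A b a hb ha hcross' cb ca
  · rw [if_neg ca, if_neg cb]
    exact hcross a ha b hb
end

section
/- Let t ≥ 2, n > k > t. Define A = {F ∈ C([n],k) : F ∩ [t+1] = {1} or F ∩ [t+1] = {2,...,t+1}} and B = {F ∈ C([n],k) : 1 ∈ F and F ∩ {2,...,t+1} ≠ ∅}. Then A and B are disjoint and cross-intersecting, with |A| = C(n-t-1, k-1) + C(n-t-1, k-t) and |B| = C(n-1, k-1) - C(n-t-1, k-1). -/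
lemma count_aux (n k : ℕ) (T S : Finset ℕ) (hT : T ⊆ Finset.Icc 1 n)
    (hS : S ⊆ T) (hSk : S.card ≤ k) :
    ((Finset.powersetCard k (Finset.Icc 1 n)).filter (fun F => F ∩ T = S)).card
      = (n - T.card).choose (k - S.card) := by
  have hc : (Finset.Icc 1 n \ T).card = n - T.card := by
    rw [Finset.card_sdiff_of_subset hT, Nat.card_Icc]; omega
  rw [← hc, ← Finset.card_powersetCard]
  apply Finset.card_bij' (fun F _ => F \ T) (fun G _ => G ∪ S)
  · intro F hF
    simp only [Finset.mem_filter, Finset.mem_powersetCard] at hF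
    obtain ⟨⟨hsub, hcard⟩, hFT⟩ := hF
    simp only [Finset.mem_powersetCard]
    constructor
    · intro x hx
      simp only [Finset.mem_sdiff] at hx ⊢
      exact ⟨hsub hx.1, hx.2⟩
    · have h1 : F \ T = F \ (F ∩ T) := by
        ext x; simp only [Finset.mem_sdiff, Finset.mem_inter]; tauto
      rw [h1, Finset.card_sdiff_of_subset Finset.inter_subset_left, hFT, hcard]
  · intro G hG
    simp only [Finset.mem_powersetCard] at hG
    obtain ⟨hsub, hcard⟩ := hG
    have hGT : ∀ x ∈ G, x ∉ T := fun x hx => (Finset.mem_sdiff.mp (hsub hx)).2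
    simp only [Finset.mem_filter, Finset.mem_powersetCard]
    refine ⟨⟨?_, ?_⟩, ?_⟩
    · intro x hx
      rcases Finset.mem_union.mp hx with h | h
      · exact (Finset.mem_sdiff.mp (hsub h)).1
      · exact hT (hS h)
    · rw [Finset.card_union_of_disjoint, hcard]
      · omega
      · exact Finset.disjoint_left.mpr fun x hx hxS => hGT x hx (hS hxS)
    · ext x
      simp only [Finset.mem_inter, Finset.mem_union]
      constructor
      · rintro ⟨h1 | h1, h2⟩
        · exact absurd h2 (hGT x h1)
        · exact h1
      · intro h; exact ⟨Or.inr h, hS h⟩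
  · intro F hF
    simp only [Finset.mem_filter, Finset.mem_powersetCard] at hF
    obtain ⟨⟨hsub, hcard⟩, hFT⟩ := hF
    ext x
    simp only [Finset.mem_union, Finset.mem_sdiff]
    constructor
    · rintro (⟨h, _⟩ | h)
      · exact h
      · rw [← hFT] at h; exact (Finset.mem_inter.mp h).1
    · intro h
      by_cases hx : x ∈ T
      · right; rw [← hFT]; exact Finset.mem_inter.mpr ⟨h, hx⟩
      · left; exact ⟨h, hx⟩
  · intro G hG
    simp only [Finset.mem_powersetCard] at hG
    have hGT : ∀ x ∈ G, x ∉ T := fun x hx => (Finset.mem_sdiff.mp (hG.1 hx)).2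
    ext x
    simp only [Finset.mem_sdiff, Finset.mem_union]
    constructor
    · rintro ⟨h1 | h1, h2⟩
      · exact h1
      · exact absurd (hS h1) h2
    · intro h; exact ⟨Or.inl h, hGT x h⟩

theorem stmt_10 (t n k : ℕ) (ht : 2 ≤ t) (htk : t < k) (hkn : k < n)
    (A B : Finset (Finset ℕ))
    (hA : A = (Finset.powersetCard k (Finset.Icc 1 n)).filter
        (fun F => F ∩ Finset.Icc 1 (t + 1) = {1} ∨
          F ∩ Finset.Icc 1 (t + 1) = Finset.Icc 2 (t + 1)))
    (hB : B = (Finset.powersetCard k (Finset.Icc 1 n)).filter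
        (fun F => 1 ∈ F ∧ (F ∩ Finset.Icc 2 (t + 1)).Nonempty)) :
    Disjoint A B ∧
      (∀ a ∈ A, ∀ b ∈ B, (a ∩ b).Nonempty) ∧
      A.card = (n - t - 1).choose (k - 1) + (n - t - 1).choose (k - t) ∧
      B.card = (n - 1).choose (k - 1) - (n - t - 1).choose (k - 1) := by
  have hTsub : Finset.Icc 1 (t + 1) ⊆ Finset.Icc 1 n := by
    intro x hx; simp only [Finset.mem_Icc] at *; omega
  have h1T : (1 : ℕ) ∈ Finset.Icc 1 (t + 1) := by simp only [Finset.mem_Icc]; omega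
  have h2T : Finset.Icc 2 (t + 1) ⊆ Finset.Icc 1 (t + 1) := by
    intro x hx; simp only [Finset.mem_Icc] at *; omega
  refine ⟨?_, ?_, ?_, ?_⟩
  · rw [hA, hB, Finset.disjoint_left]
    intro F hF hF'
    simp only [Finset.mem_filter] at hF hF'
    obtain ⟨_, h1F, x, hx⟩ := hF'
    simp only [Finset.mem_inter, Finset.mem_Icc] at hx
    rcases hF.2 with h | h
    · have : x ∈ ({1} : Finset ℕ) := by
        rw [← h]; exact Finset.mem_inter.mpr ⟨hx.1, Finset.mem_Icc.mpr (by omega)⟩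
      simp at this; omega
    · have : (1 : ℕ) ∈ Finset.Icc 2 (t + 1) := by
        rw [← h]; exact Finset.mem_inter.mpr ⟨h1F, h1T⟩
      simp at this
  · intro a ha b hb
    rw [hA, Finset.mem_filter] at ha
    rw [hB, Finset.mem_filter] at hb
    obtain ⟨_, h1b, hbne⟩ := hb
    rcases ha.2 with h | h
    · refine ⟨1, Finset.mem_inter.mpr ⟨?_, h1b⟩⟩
      have : (1 : ℕ) ∈ a ∩ Finset.Icc 1 (t + 1) := by rw [h]; simp
      exact (Finset.mem_inter.mp this).1
    · obtain ⟨x, hx⟩ := hbne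
      simp only [Finset.mem_inter] at hx
      refine ⟨x, Finset.mem_inter.mpr ⟨?_, hx.1⟩⟩
      have : x ∈ a ∩ Finset.Icc 1 (t + 1) := by rw [h]; exact hx.2
      exact (Finset.mem_inter.mp this).1
  · rw [hA, Finset.filter_or, Finset.card_union_of_disjoint]
    · rw [count_aux n k _ _ hTsub (Finset.singleton_subset_iff.mpr h1T) (by rw [Finset.card_singleton]; omega),
        count_aux n k _ _ hTsub h2T (by rw [Nat.card_Icc]; omega)]
      rw [Finset.card_singleton, Nat.card_Icc, Nat.card_Icc]
      congr 2
    · rw [Finset.disjoint_left]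
      intro F hF hF'
      simp only [Finset.mem_filter] at hF hF'
      have : (2 : ℕ) ∈ ({1} : Finset ℕ) := by
        rw [← hF.2, hF'.2]; simp only [Finset.mem_Icc]; omega
      simp at this
  · have hdis : Disjoint B ((Finset.powersetCard k (Finset.Icc 1 n)).filter
        (fun F => F ∩ Finset.Icc 1 (t + 1) = {1})) := by
      rw [hB, Finset.disjoint_left]
      intro F hF hF'
      simp only [Finset.mem_filter] at hF hF'
      obtain ⟨_, _, x, hx⟩ := hF
      simp only [Finset.mem_inter, Finset.mem_Icc] at hx
      have : x ∈ ({1} : Finset ℕ) := by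
        rw [← hF'.2]; exact Finset.mem_inter.mpr ⟨hx.1, Finset.mem_Icc.mpr (by omega)⟩
      simp at this; omega
    have key : ((Finset.powersetCard k (Finset.Icc 1 n)).filter (fun F => 1 ∈ F)).card
        = B.card + ((Finset.powersetCard k (Finset.Icc 1 n)).filter
          (fun F => F ∩ Finset.Icc 1 (t + 1) = {1})).card := by
      rw [← Finset.card_union_of_disjoint hdis, hB, ← Finset.filter_or]
      congr 1
      apply Finset.filter_congr
      intro F _
      constructor
      · intro h1F
        by_cases hne : (F ∩ Finset.Icc 2 (t + 1)).Nonempty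
        · exact Or.inl ⟨h1F, hne⟩
        · right
          ext x
          simp only [Finset.mem_inter, Finset.mem_Icc, Finset.mem_singleton]
          constructor
          · rintro ⟨hxF, hx1, hx2⟩
            by_contra hx
            exact hne ⟨x, Finset.mem_inter.mpr ⟨hxF, Finset.mem_Icc.mpr (by omega)⟩⟩
          · rintro rfl; exact ⟨h1F, by omega⟩
      · rintro (⟨h, _⟩ | h)
        · exact h
        · have : (1 : ℕ) ∈ F ∩ Finset.Icc 1 (t + 1) := by rw [h]; simp
          exact (Finset.mem_inter.mp this).1
    have hone : ((Finset.powersetCard k (Finset.Icc 1 n)).filter (fun F => 1 ∈ F)).card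
        = (n - 1).choose (k - 1) := by
      have := count_aux n k {1} {1} (by simp; omega) (le_refl _) (by rw [Finset.card_singleton]; omega)
      simp only [Finset.card_singleton] at this
      rw [← this]
      congr 1
      apply Finset.filter_congr
      intro F _
      constructor
      · intro h; ext x; simp only [Finset.mem_inter, Finset.mem_singleton]
        constructor
        · rintro ⟨_, rfl⟩; rfl
        · rintro rfl; exact ⟨h, rfl⟩
      · intro h
        have : (1 : ℕ) ∈ F ∩ {1} := by rw [h]; simp
        exact (Finset.mem_inter.mp this).1
    have hsingle := count_aux n k _ _ hTsub (Finset.singleton_subset_iff.mpr h1T)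
      (by rw [Finset.card_singleton]; omega)
    simp only [Finset.card_singleton, Nat.card_Icc] at hsingle
    rw [hone, hsingle] at key
    have heq : n - (t + 1 + 1 - 1) = n - t - 1 := by omega
    rw [heq] at key
    omega
end

section
/- Define f₁(α) = 5α³ - 10α⁴ + 6α⁵ - α⁶ and f₂(α) = 10α³ - 25α⁴ + 21α⁵ - 6α⁶. Then for α ∈ (2-√3, 1), both f₁(α) > α²(1-α) and f₂(α) > α²(1-α) hold; moreover the solution set of f₁(α) > α²(1-α) in (0,1) is exactly (2-√3, 1), and the solution set of f₂(α) > α²(1-α) in (0,1) is exactly ((9-√57)/12, 1). -/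
theorem stmt_18 (f₁ f₂ : ℝ → ℝ)
    (hf₁ : ∀ α, f₁ α = 5 * α ^ 3 - 10 * α ^ 4 + 6 * α ^ 5 - α ^ 6)
    (hf₂ : ∀ α, f₂ α = 10 * α ^ 3 - 25 * α ^ 4 + 21 * α ^ 5 - 6 * α ^ 6) :
    (∀ α ∈ Set.Ioo (2 - Real.sqrt 3) 1,
        f₁ α > α ^ 2 * (1 - α) ∧ f₂ α > α ^ 2 * (1 - α)) ∧
      (∀ α ∈ Set.Ioo (0 : ℝ) 1,
        (f₁ α > α ^ 2 * (1 - α) ↔ α ∈ Set.Ioo (2 - Real.sqrt 3) 1)) ∧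
      (∀ α ∈ Set.Ioo (0 : ℝ) 1,
        (f₂ α > α ^ 2 * (1 - α) ↔ α ∈ Set.Ioo ((9 - Real.sqrt 57) / 12) 1)) := by
  have h3 : (Real.sqrt 3) ^ 2 = 3 := Real.sq_sqrt (by norm_num)
  have h3a : (1 : ℝ) < Real.sqrt 3 := by nlinarith [Real.sqrt_nonneg 3]
  have h3b : Real.sqrt 3 < 2 := by nlinarith [Real.sqrt_nonneg 3]
  have h57 : (Real.sqrt 57) ^ 2 = 57 := Real.sq_sqrt (by norm_num)
  have h57a : (7 : ℝ) < Real.sqrt 57 := by nlinarith [Real.sqrt_nonneg 57]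
  have h57b : Real.sqrt 57 < 8 := by nlinarith [Real.sqrt_nonneg 57]
  have key1 : ∀ α ∈ Set.Ioo (0 : ℝ) 1,
      (f₁ α > α ^ 2 * (1 - α) ↔ α ∈ Set.Ioo (2 - Real.sqrt 3) 1) := by
    rintro α ⟨h0, h1⟩
    rw [hf₁]
    constructor
    · intro h
      refine ⟨?_, h1⟩
      by_contra hle
      push_neg at hle
      have ha1 : α - (2 - Real.sqrt 3) ≤ 0 := by linarith
      have ha2 : α - (2 + Real.sqrt 3) ≤ 0 := by linarith
      have hq : α ^ 2 - 4 * α + 1 ≥ 0 := by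
        nlinarith [mul_nonneg (neg_nonneg.mpr ha1) (neg_nonneg.mpr ha2)]
      nlinarith [mul_nonneg (mul_nonneg (mul_pos h0 h0).le
          (mul_pos (sub_pos.mpr h1) (sub_pos.mpr h1)).le) hq]
    · rintro ⟨ha, _⟩
      have ha1 : α - (2 - Real.sqrt 3) > 0 := by linarith
      have ha2 : (2 + Real.sqrt 3) - α > 0 := by linarith
      have hq : α ^ 2 - 4 * α + 1 < 0 := by nlinarith [mul_pos ha1 ha2]
      nlinarith [mul_pos (mul_pos (mul_pos h0 h0)
        (mul_pos (sub_pos.mpr h1) (sub_pos.mpr h1))) (neg_pos.mpr hq)]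
  have key2 : ∀ α ∈ Set.Ioo (0 : ℝ) 1,
      (f₂ α > α ^ 2 * (1 - α) ↔ α ∈ Set.Ioo ((9 - Real.sqrt 57) / 12) 1) := by
    rintro α ⟨h0, h1⟩
    rw [hf₂]
    constructor
    · intro h
      refine ⟨?_, h1⟩
      by_contra hle
      push_neg at hle
      have ha1 : α - (9 - Real.sqrt 57) / 12 ≤ 0 := by linarith
      have ha2 : α - (9 + Real.sqrt 57) / 12 ≤ 0 := by nlinarith
      have hq : 6 * α ^ 2 - 9 * α + 1 ≥ 0 := by
        nlinarith [mul_nonneg (neg_nonneg.mpr ha1) (neg_nonneg.mpr ha2)]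
      nlinarith [mul_nonneg (mul_nonneg (mul_pos h0 h0).le
          (mul_pos (sub_pos.mpr h1) (sub_pos.mpr h1)).le) hq]
    · rintro ⟨ha, _⟩
      have ha1 : α - (9 - Real.sqrt 57) / 12 > 0 := by linarith
      have ha2 : (9 + Real.sqrt 57) / 12 - α > 0 := by nlinarith
      have hq : 6 * α ^ 2 - 9 * α + 1 < 0 := by nlinarith [mul_pos ha1 ha2]
      nlinarith [mul_pos (mul_pos (mul_pos h0 h0)
        (mul_pos (sub_pos.mpr h1) (sub_pos.mpr h1))) (neg_pos.mpr hq)]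
  refine ⟨?_, key1, key2⟩
  rintro α ⟨ha, h1⟩
  have h0 : (0 : ℝ) < α := by nlinarith
  have hmem : α ∈ Set.Ioo (0 : ℝ) 1 := ⟨h0, h1⟩
  refine ⟨(key1 α hmem).mpr ⟨ha, h1⟩, (key2 α hmem).mpr ⟨?_, h1⟩⟩
  have hlt : (9 - Real.sqrt 57) / 12 < 2 - Real.sqrt 3 := by
    nlinarith [sq_nonneg (Real.sqrt 57 - 12 * Real.sqrt 3),
      sq_nonneg (12 * Real.sqrt 3 - Real.sqrt 57)]
  linarith
end
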